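/- Let G ≤ Aut T be a self-similar group containing a rooted automorphism a whose label at the root is a d-cycle. If for each n ∈ ℕ there exists a vertex u_n ∈ L_n such that ψ_{u_n}(st_G(L_n)) = G, then G is super strongly fractal. -/

import Mathlib

open Equiv

namespace TreeFract

variable {X : Type*}

/-- The automorphism group of the rooted `d`-adic tree with vertex set the free
monoid `List X`: permutations of the vertex set fixing the root and sending
children of a vertex to children of its image (this is exactly incidence
preservation for the rooted tree). -/
def AutT (X : Type*) : Subgroup (Equiv.Perm (List X)) where
  carrier := {g | g [] = [] ∧ ∀ (u : List X) (x : X), ∃ y : X, g (u ++ [x]) = g u ++ [y]}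
  one_mem' := ⟨rfl, fun _ x => ⟨x, rfl⟩⟩
  mul_mem' := by
    rintro f g ⟨hf1, hf2⟩ ⟨hg1, hg2⟩
    refine ⟨?_, fun u x => ?_⟩
    · show f (g []) = []
      rw [hg1, hf1]
    · obtain ⟨y, hy⟩ := hg2 u x
      obtain ⟨z, hz⟩ := hf2 (g u) y
      exact ⟨z, by show f (g (u ++ [x])) = f (g u) ++ [z]; rw [hy, hz]⟩
  inv_mem' := by
    rintro g ⟨hg1, hg2⟩
    have hinj := g.injective
    refine ⟨?_, fun u x => ?_⟩
    · apply hinj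
      show g (g⁻¹ []) = g []
      rw [Equiv.Perm.coe_inv, Equiv.apply_symm_apply, hg1]
    · have hne : g⁻¹ (u ++ [x]) ≠ [] := by
        intro h
        have h2 : u ++ [x] = g [] := by
          conv_lhs => rw [← Equiv.apply_symm_apply g (u ++ [x]), ← Equiv.Perm.coe_inv, h]
        rw [hg1] at h2
        simp at h2
      obtain ⟨y, hy⟩ : ∃ y, g⁻¹ (u ++ [x]) = (g⁻¹ (u ++ [x])).dropLast ++ [y] :=
        ⟨(g⁻¹ (u ++ [x])).getLast hne, (List.dropLast_append_getLast hne).symm⟩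
      obtain ⟨z, hz⟩ := hg2 ((g⁻¹ (u ++ [x])).dropLast) y
      have happ : g ((g⁻¹ (u ++ [x])).dropLast) ++ [z] = u ++ [x] := by
        rw [← hz, ← hy, Equiv.Perm.coe_inv, Equiv.apply_symm_apply]
      have h2 : g ((g⁻¹ (u ++ [x])).dropLast) = u ∧ ([z] : List X) = [x] :=
        List.append_inj' happ rfl
      refine ⟨y, ?_⟩
      rw [hy]
      congr 1
      apply hinj
      rw [Equiv.Perm.coe_inv, Equiv.apply_symm_apply, ← Equiv.Perm.coe_inv, h2.1]

/-- The underlying function of the section of `g` at the vertex `u`. -/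
def sectFun (g : Equiv.Perm (List X)) (u : List X) : List X → List X :=
  fun v => (g (u ++ v)).drop (g u).length

open scoped Classical in
/-- The section `g_u` of a tree automorphism `g` at a vertex `u`, i.e. the unique
automorphism with `g (u ++ v) = g u ++ g_u v` for all `v`.  (By convention it is
the identity for permutations which are not tree automorphisms.) -/
noncomputable def sect (g : Equiv.Perm (List X)) (u : List X) : Equiv.Perm (List X) :=
  if h : Function.Bijective (sectFun g u) then Equiv.ofBijective _ h else 1

/-- The underlying function of the label of `g` at the vertex `u`. -/
def labelFun (g : Equiv.Perm (List X)) (u : List X) : X → X :=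
  fun x => (g (u ++ [x])).getLastD x

open scoped Classical in
/-- The label `g_(u)` of a tree automorphism `g` at a vertex `u`: the permutation
of `X` with `g (u ++ [x]) = g u ++ [g_(u) x]`.  (By convention it is the identity
for permutations which are not tree automorphisms.) -/
noncomputable def label (g : Equiv.Perm (List X)) (u : List X) : Equiv.Perm X :=
  if h : Function.Bijective (labelFun g u) then Equiv.ofBijective _ h else 1

/-- The stabilizer `st_G(u)` of the vertex `u` in `G`. -/
def stV (G : Subgroup (Equiv.Perm (List X))) (u : List X) : Subgroup (Equiv.Perm (List X)) where
  carrier := {g | g ∈ G ∧ g u = u}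
  one_mem' := ⟨one_mem G, rfl⟩
  mul_mem' := by
    rintro f g ⟨hf, hf2⟩ ⟨hg, hg2⟩
    exact ⟨mul_mem hf hg, by show f (g u) = u; rw [hg2, hf2]⟩
  inv_mem' := by
    rintro g ⟨hg, hg2⟩
    refine ⟨inv_mem hg, ?_⟩
    apply g.injective
    show g (g⁻¹ u) = g u
    rw [Equiv.Perm.coe_inv, Equiv.apply_symm_apply, hg2]

/-- The stabilizer `st_G(L_n)` of the `n`-th level in `G`. -/
def stL (G : Subgroup (Equiv.Perm (List X))) (n : ℕ) : Subgroup (Equiv.Perm (List X)) where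
  carrier := {g | g ∈ G ∧ ∀ u : List X, u.length = n → g u = u}
  one_mem' := ⟨one_mem G, fun _ _ => rfl⟩
  mul_mem' := by
    rintro f g ⟨hf, hf2⟩ ⟨hg, hg2⟩
    exact ⟨mul_mem hf hg, fun u hu => by show f (g u) = u; rw [hg2 u hu, hf2 u hu]⟩
  inv_mem' := by
    rintro g ⟨hg, hg2⟩
    refine ⟨inv_mem hg, fun u hu => ?_⟩
    apply g.injective
    show g (g⁻¹ u) = g u
    rw [Equiv.Perm.coe_inv, Equiv.apply_symm_apply, hg2 u hu]

/-- `G` is self-similar: sections of elements of `G` lie in `G`. -/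
def SelfSimilar (G : Subgroup (Equiv.Perm (List X))) : Prop :=
  ∀ g ∈ G, ∀ u : List X, sect g u ∈ G

/-- `G` acts transitively on the first level of the tree. -/
def FirstLevelTransitive (G : Subgroup (Equiv.Perm (List X))) : Prop :=
  ∀ x y : X, ∃ g ∈ G, g [x] = [y]

/-- `G` is level transitive: it acts transitively on every level of the tree. -/
def LevelTransitive (G : Subgroup (Equiv.Perm (List X))) : Prop :=
  ∀ (n : ℕ) (u v : List X), u.length = n → v.length = n → ∃ g ∈ G, g u = v

/-- `G` is fractal: `ψ_u(st_G(u)) = G` for every vertex `u`. -/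
def Fractal (G : Subgroup (Equiv.Perm (List X))) : Prop :=
  ∀ u : List X,
    (fun g => sect g u) '' (stV G u : Set (Equiv.Perm (List X))) = (G : Set (Equiv.Perm (List X)))

/-- `G` is strongly fractal: `ψ_x(st_G(L_1)) = G` for every first-level vertex `x`. -/
def StronglyFractal (G : Subgroup (Equiv.Perm (List X))) : Prop :=
  ∀ x : X,
    (fun g => sect g [x]) '' (stL G 1 : Set (Equiv.Perm (List X))) = (G : Set (Equiv.Perm (List X)))

/-- `G` is super strongly fractal: `ψ_u(st_G(L_n)) = G` for every `n` and every `u ∈ L_n`. -/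
def SuperStronglyFractal (G : Subgroup (Equiv.Perm (List X))) : Prop :=
  ∀ (n : ℕ) (u : List X), u.length = n →
    (fun g => sect g u) '' (stL G n : Set (Equiv.Perm (List X))) = (G : Set (Equiv.Perm (List X)))

/-- The normal closure `⟨S⟩^G` of a subset `S ⊆ G` in the subgroup `G`, realized as a
subgroup of the ambient group: the subgroup generated by all `G`-conjugates of `S`. -/
def normalClosureIn (G : Subgroup (Equiv.Perm (List X))) (S : Set (Equiv.Perm (List X))) :
    Subgroup (Equiv.Perm (List X)) :=
  Subgroup.closure {t | ∃ g ∈ G, ∃ s ∈ S, t = g * s * g⁻¹}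

end TreeFract
namespace TreeFract

/-! ### The Hanoi towers generators -/

section Hanoi

variable {d : ℕ}

/-- The underlying function of the automorphism `a_{ij}` of the Hanoi Towers group:
it swaps the first occurrence of `i` or `j` in a word. -/
def hanoiFun (i j : Fin d) : List (Fin d) → List (Fin d)
  | [] => []
  | x :: w => if x = i then j :: w else if x = j then i :: w else x :: hanoiFun i j w

lemma hanoiFun_invol (i j : Fin d) : ∀ w, hanoiFun i j (hanoiFun i j w) = w
  | [] => rfl
  | x :: w => by
    by_cases h1 : x = i
    · subst h1
      by_cases h2 : j = x
      · simp [hanoiFun, h2]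
      · simp [hanoiFun, h2]
    · by_cases h2 : x = j
      · subst h2
        simp [hanoiFun, h1]
      · simp [hanoiFun, h1, h2, hanoiFun_invol i j w]

/-- The automorphism `a_{ij}` of the `d`-adic tree: its label at the root is the
transposition `(x_i x_j)`, its sections at the first-level vertices `x_i` and `x_j`
are trivial and all its other first-level sections equal `a_{ij}` again. -/
def hanoiA (i j : Fin d) : Equiv.Perm (List (Fin d)) :=
  ⟨hanoiFun i j, hanoiFun i j, hanoiFun_invol i j, hanoiFun_invol i j⟩

end Hanoi

/-- The generator `b_i = a_{i,i+1}` (here `i` runs through `0, …, d-2`,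
corresponding to the paper's `b_1, …, b_{d-1}`). -/
def hanoiB (d : ℕ) (i : ℕ) (h : i + 1 < d) : Equiv.Perm (List (Fin d)) :=
  hanoiA ⟨i, Nat.lt_of_succ_lt h⟩ ⟨i + 1, h⟩

/-- The subgroup `G = ⟨b_1, …, b_{d-1}⟩` of the Hanoi Towers group. -/
def hanoiGroup (d : ℕ) : Subgroup (Equiv.Perm (List (Fin d))) :=
  Subgroup.closure {g | ∃ (i : ℕ) (h : i + 1 < d), g = hanoiB d i h}

/-! ### GGS groups (and the rooted automorphism `a`) -/

section GGS

variable {p : ℕ}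

/-- The function adding `m` to the first letter of a word over `ZMod p`. -/
def rotFun (m : ZMod p) : List (ZMod p) → List (ZMod p)
  | [] => []
  | x :: w => (x + m) :: w

/-- The rooted automorphism of the `p`-adic tree whose label at the root is the
`p`-cycle `x ↦ x + m`; for `m = 1` this is the generator `a` of a GGS-group
(identifying `x_i` with `i mod p`). -/
def rotPerm (m : ZMod p) : Equiv.Perm (List (ZMod p)) :=
  ⟨rotFun m, rotFun (-m),
    by intro w; cases w <;> simp [rotFun],
    by intro w; cases w <;> simp [rotFun]⟩

/-- The underlying function of the GGS generator `b` with defining vector `e`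
(the value `e 0` is irrelevant; `e i` for `i ≠ 0` are the coordinates
`e_1, …, e_{p-1}`): `b` fixes the first level, its section at `x_i` is
`a^{e_i}` for `i = 1, …, p-1` and its section at `x_p` (identified with `0`)
is `b` again. -/
def ggsFun (e : ZMod p → ZMod p) : List (ZMod p) → List (ZMod p)
  | [] => []
  | x :: w => if x = 0 then x :: ggsFun e w else x :: rotFun (e x) w

lemma ggsFun_inv (e : ZMod p → ZMod p) : ∀ w, ggsFun (fun i => -(e i)) (ggsFun e w) = w
  | [] => rfl
  | x :: w => by
    by_cases h : x = 0
    · simp only [ggsFun, if_pos h]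
      rw [ggsFun_inv e w]
    · simp only [ggsFun, if_neg h]
      cases w <;> simp [rotFun]

/-- The GGS generator `b` with defining vector `e`, as a tree automorphism. -/
def ggsB (e : ZMod p → ZMod p) : Equiv.Perm (List (ZMod p)) :=
  ⟨ggsFun e, ggsFun (fun i => -(e i)), ggsFun_inv e, by
    intro w
    have h := ggsFun_inv (fun i => -(e i)) w
    simpa using h⟩

end GGS

/-- The GGS-group `G = ⟨a, b⟩` over the `p`-adic tree with defining vector `e`. -/
def ggsGroup (p : ℕ) (e : ZMod p → ZMod p) : Subgroup (Equiv.Perm (List (ZMod p))) :=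
  Subgroup.closure {rotPerm 1, ggsB e}

/-! ### The first Grigorchuk group -/

/-- The three directed generators `b, c, d` (for `k % 3 = 0, 1, 2` respectively) of the
first Grigorchuk group, defined by the mutual recursion
`b = (a, c)`, `c = (a, d)`, `d = (1, b)` (identifying `x_1` with `0` and `x_2` with `1`). -/
def griFun : ℕ → List (ZMod 2) → List (ZMod 2)
  | _, [] => []
  | k, x :: w => if x = 0 then (if k % 3 = 2 then x :: w else x :: rotFun 1 w)
                 else x :: griFun (k + 1) w

lemma griFun_invol : ∀ (w : List (ZMod 2)) (k : ℕ), griFun k (griFun k w) = w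
  | [], _ => rfl
  | x :: w, k => by
    by_cases h : x = 0
    · by_cases h3 : k % 3 = 2
      · simp [griFun, h, h3]
      · simp only [griFun, if_pos h, if_neg h3]
        cases w with
        | nil => rfl
        | cons y v =>
            have hy : y + 1 + 1 = y := by
              rw [add_assoc]
              simp [show (1 : ZMod 2) + 1 = 0 from rfl]
            simp [rotFun, hy]
    · simp only [griFun, if_neg h]
      rw [griFun_invol w (k + 1)]

/-- The generator `b` of the first Grigorchuk group, with sections `(a, c)`. -/
def griB : Equiv.Perm (List (ZMod 2)) :=
  ⟨griFun 0, griFun 0, fun w => griFun_invol w 0, fun w => griFun_invol w 0⟩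

/-- The generator `c` of the first Grigorchuk group, with sections `(a, d)`. -/
def griC : Equiv.Perm (List (ZMod 2)) :=
  ⟨griFun 1, griFun 1, fun w => griFun_invol w 1, fun w => griFun_invol w 1⟩

/-- The generator `d` of the first Grigorchuk group, with sections `(1, b)`. -/
def griD : Equiv.Perm (List (ZMod 2)) :=
  ⟨griFun 2, griFun 2, fun w => griFun_invol w 2, fun w => griFun_invol w 2⟩

/-- The first Grigorchuk group `𝒢 = ⟨a, b, c, d⟩` acting on the binary tree. -/
def grigorchukGroup : Subgroup (Equiv.Perm (List (ZMod 2))) :=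
  Subgroup.closure {rotPerm 1, griB, griC, griD}

end TreeFract

namespace TreeFract

/-! The rooted automorphism `a`, whose root label is a full cycle, makes `G` transitive on the
first level. Conjugation by `g ∈ G` preserves `st_G(L_n)` and turns the section at `u` into the
section at `g u` conjugated by `g_u ∈ G`, so `ψ_u(st_G(L_n)) = G` propagates along `G`-orbits.
At level 1 this gives strong fractality; lifting transitivity on the subtrees through
`st_G(L_1)` then makes `G` level transitive, and the hypothesis at one vertex of each level
spreads to the whole level. -/

section Sections

variable {X : Type*} {g h : Equiv.Perm (List X)}

lemma autT_apply_nil (hg : g ∈ AutT X) : g [] = [] := hg.1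

lemma autT_exists_apply_append (hg : g ∈ AutT X) (u v : List X) :
    ∃ t : List X, t.length = v.length ∧ g (u ++ v) = g u ++ t := by
  induction v using List.reverseRecOn with
  | nil => exact ⟨[], rfl, by simp⟩
  | append_singleton v x ih =>
    obtain ⟨t, ht, hgt⟩ := ih
    obtain ⟨y, hy⟩ := hg.2 (u ++ v) x
    refine ⟨t ++ [y], by simp [ht], ?_⟩
    rw [← List.append_assoc, hy, hgt, List.append_assoc]

lemma autT_length_apply (hg : g ∈ AutT X) (u : List X) : (g u).length = u.length := by
  obtain ⟨t, ht, hgt⟩ := autT_exists_apply_append hg [] u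
  rw [List.nil_append, autT_apply_nil hg, List.nil_append] at hgt
  rw [hgt, ht]

lemma apply_append_sectFun (hg : g ∈ AutT X) (u v : List X) :
    g (u ++ v) = g u ++ sectFun g u v := by
  obtain ⟨t, -, hgt⟩ := autT_exists_apply_append hg u v
  rw [sectFun, hgt, List.drop_left]

lemma sectFun_inv_sectFun (hg : g ∈ AutT X) (u v : List X) :
    sectFun g⁻¹ (g u) (sectFun g u v) = v := by
  have h := apply_append_sectFun (inv_mem hg) (g u) (sectFun g u v)
  rw [← apply_append_sectFun hg u v, Equiv.Perm.coe_inv, Equiv.symm_apply_apply,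
    Equiv.symm_apply_apply] at h
  exact (List.append_cancel_left h).symm

lemma sectFun_bijective (hg : g ∈ AutT X) (u : List X) : Function.Bijective (sectFun g u) := by
  refine ⟨Function.LeftInverse.injective (sectFun_inv_sectFun hg u), fun v => ?_⟩
  refine ⟨sectFun g⁻¹ (g u) v, ?_⟩
  simpa using sectFun_inv_sectFun (inv_mem hg) (g u) v

lemma apply_append_sect (hg : g ∈ AutT X) (u v : List X) : g (u ++ v) = g u ++ sect g u v := by
  rw [sect, dif_pos (sectFun_bijective hg u)]
  exact apply_append_sectFun hg u v

lemma length_sect (hg : g ∈ AutT X) (u v : List X) : (sect g u v).length = v.length := by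
  have h := congrArg List.length (apply_append_sect hg u v)
  simp only [List.length_append, autT_length_apply hg] at h
  omega

lemma sect_one (u : List X) : sect (1 : Equiv.Perm (List X)) u = 1 := by
  ext v : 1
  simpa using (apply_append_sect (one_mem (AutT X)) u v).symm

lemma sect_mul (hg : g ∈ AutT X) (hh : h ∈ AutT X) (u : List X) :
    sect (g * h) u = sect g (h u) * sect h u := by
  ext v : 1
  have key := apply_append_sect (mul_mem hg hh) u v
  rw [Equiv.Perm.mul_apply, Equiv.Perm.mul_apply, apply_append_sect hh,
    apply_append_sect hg] at key
  exact (List.append_cancel_left key).symm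

lemma sect_inv (hg : g ∈ AutT X) (u : List X) : sect g⁻¹ (g u) = (sect g u)⁻¹ := by
  have h := sect_mul (inv_mem hg) hg u
  rw [inv_mul_cancel, sect_one] at h
  exact eq_inv_of_mul_eq_one_left h.symm

lemma sect_conj_of_apply_eq (hg : g ∈ AutT X) (hh : h ∈ AutT X) {u : List X} (hu : h u = u) :
    sect (g * h * g⁻¹) (g u) = sect g u * sect h u * (sect g u)⁻¹ := by
  rw [sect_mul (mul_mem hg hh) (inv_mem hg), sect_inv hg, Equiv.Perm.coe_inv,
    Equiv.symm_apply_apply, sect_mul hg hh, hu]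

lemma apply_append_labelFun (hg : g ∈ AutT X) (u : List X) (x : X) :
    g (u ++ [x]) = g u ++ [labelFun g u x] := by
  obtain ⟨y, hy⟩ := hg.2 u x
  simp [labelFun, hy]

lemma labelFun_inv_labelFun (hg : g ∈ AutT X) (u : List X) (x : X) :
    labelFun g⁻¹ (g u) (labelFun g u x) = x := by
  have h := apply_append_labelFun (inv_mem hg) (g u) (labelFun g u x)
  rw [← apply_append_labelFun hg u x, Equiv.Perm.coe_inv, Equiv.symm_apply_apply,
    Equiv.symm_apply_apply] at h
  simpa using (List.append_cancel_left h).symm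

lemma labelFun_bijective (hg : g ∈ AutT X) (u : List X) : Function.Bijective (labelFun g u) := by
  refine ⟨Function.LeftInverse.injective (labelFun_inv_labelFun hg u), fun x => ?_⟩
  refine ⟨labelFun g⁻¹ (g u) x, ?_⟩
  simpa using labelFun_inv_labelFun (inv_mem hg) (g u) x

lemma apply_append_label (hg : g ∈ AutT X) (u : List X) (x : X) :
    g (u ++ [x]) = g u ++ [label g u x] := by
  rw [label, dif_pos (labelFun_bijective hg u)]
  exact apply_append_labelFun hg u x

end Sections

section Rooted

variable {X : Type*} {a : Equiv.Perm (List X)}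

lemma rooted_apply_cons (ha : a ∈ AutT X) (hroot : ∀ x : X, sect a [x] = 1) (x : X)
    (w : List X) : a (x :: w) = label a [] x :: w := by
  have h := apply_append_sect ha [x] w
  rwa [hroot, ← List.nil_append [x], apply_append_label ha, autT_apply_nil ha] at h

lemma rooted_zpow_apply_cons (ha : a ∈ AutT X) (hroot : ∀ x : X, sect a [x] = 1) (k : ℤ)
    (x : X) (w : List X) : (a ^ k) (x :: w) = (label a [] ^ k) x :: w := by
  have hcons : ∀ y w, a (y :: w) = label a [] y :: w := rooted_apply_cons ha hroot
  have hinv : ∀ y w, a⁻¹ (y :: w) = (label a [])⁻¹ y :: w := fun y w => by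
    rw [Equiv.Perm.inv_eq_iff_eq, hcons, Equiv.Perm.coe_inv, Equiv.apply_symm_apply]
  induction k using Int.induction_on generalizing x with
  | zero => simp
  | succ k ih => rw [zpow_add_one, zpow_add_one, Equiv.Perm.mul_apply, hcons, ih]; rfl
  | pred k ih => rw [zpow_sub_one, zpow_sub_one, Equiv.Perm.mul_apply, hinv, ih]; rfl

lemma _root_.Equiv.Perm.IsCycle.exists_zpow_apply_eq_of_support_eq_univ {α : Type*} [Fintype α]
    [DecidableEq α] {σ : Equiv.Perm α} (hσ : σ.IsCycle) (hsupp : σ.support = Finset.univ)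
    (x y : α) : ∃ k : ℤ, (σ ^ k) x = y :=
  hσ.sameCycle (by simp [← Equiv.Perm.mem_support, hsupp])
    (by simp [← Equiv.Perm.mem_support, hsupp])

lemma firstLevelTransitive_of_rooted [Fintype X] [DecidableEq X]
    {G : Subgroup (Equiv.Perm (List X))} (hG : G ≤ AutT X) (haG : a ∈ G)
    (hroot : ∀ x : X, sect a [x] = 1)
    (hcyc : (label a []).IsCycle) (hcycsupp : (label a []).support = Finset.univ) :
    FirstLevelTransitive G := fun x y => by
  obtain ⟨k, hk⟩ := hcyc.exists_zpow_apply_eq_of_support_eq_univ hcycsupp x y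
  exact ⟨a ^ k, zpow_mem haG k, by rw [rooted_zpow_apply_cons (hG haG) hroot, hk]⟩

end Rooted

section Fractality

variable {X : Type*} {G : Subgroup (Equiv.Perm (List X))}

lemma mul_mul_inv_mem_stL (hG : G ≤ AutT X) {g h : Equiv.Perm (List X)} (hg : g ∈ G)
    {n : ℕ} (hh : h ∈ stL G n) : g * h * g⁻¹ ∈ stL G n := by
  refine ⟨mul_mem (mul_mem hg hh.1) (inv_mem hg), fun w hw => ?_⟩
  have hlen : (g⁻¹ w).length = n := by rw [autT_length_apply (inv_mem (hG hg)), hw]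
  rw [Equiv.Perm.mul_apply, Equiv.Perm.mul_apply, hh.2 _ hlen, Equiv.Perm.coe_inv,
    Equiv.apply_symm_apply]

lemma sect_image_stL_subset (hss : SelfSimilar G) (n : ℕ) (u : List X) :
    (fun g => sect g u) '' (stL G n : Set (Equiv.Perm (List X))) ⊆ G := by
  rintro _ ⟨h, hh, rfl⟩
  exact hss h hh.1 u

lemma sect_image_stL_eq_of_apply_eq (hG : G ≤ AutT X) (hss : SelfSimilar G)
    {g : Equiv.Perm (List X)} (hg : g ∈ G) {n : ℕ} {u : List X} (hu : u.length = n)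
    (hfrac : (fun f => sect f u) '' (stL G n : Set (Equiv.Perm (List X))) = G) :
    (fun f => sect f (g u)) '' (stL G n : Set (Equiv.Perm (List X))) = G := by
  refine (sect_image_stL_subset hss n _).antisymm fun c hc => ?_
  have hs : sect g u ∈ G := hss g hg u
  obtain ⟨h, hh, hsect⟩ :
      (sect g u)⁻¹ * c * sect g u ∈ (fun f => sect f u) '' (stL G n : Set _) := by
    rw [hfrac]
    exact mul_mem (mul_mem (inv_mem hs) hc) hs
  refine ⟨g * h * g⁻¹, mul_mul_inv_mem_stL hG hg hh, ?_⟩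
  change sect h u = _ at hsect
  change sect (g * h * g⁻¹) (g u) = c
  rw [sect_conj_of_apply_eq (hG hg) (hG hh.1) (hh.2 u hu), hsect]
  group

lemma stronglyFractal_of_firstLevelTransitive (hG : G ≤ AutT X) (hss : SelfSimilar G)
    (htrans : FirstLevelTransitive G)
    (hfrac : ∃ u : List X, u.length = 1 ∧
      (fun f => sect f u) '' (stL G 1 : Set (Equiv.Perm (List X))) = G) :
    StronglyFractal G := fun y => by
  obtain ⟨u, hu, hfrac⟩ := hfrac
  obtain ⟨x, rfl⟩ := List.length_eq_one_iff.mp hu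
  obtain ⟨g, hg, hgxy⟩ := htrans x y
  simpa only [hgxy] using sect_image_stL_eq_of_apply_eq hG hss hg hu hfrac

lemma levelTransitive_of_stronglyFractal (hG : G ≤ AutT X) (htrans : FirstLevelTransitive G)
    (hfrac : StronglyFractal G) : LevelTransitive G := by
  intro n
  induction n with
  | zero =>
    intro u v hu hv
    rw [List.length_eq_zero_iff.mp hu, List.length_eq_zero_iff.mp hv]
    exact ⟨1, one_mem G, rfl⟩
  | succ n ih =>
    intro xu yv hxu hyv
    obtain ⟨x, u, rfl⟩ := List.exists_cons_of_length_eq_add_one hxu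
    obtain ⟨y, v, rfl⟩ := List.exists_cons_of_length_eq_add_one hyv
    rw [List.length_cons, Nat.add_right_cancel_iff] at hxu hyv
    obtain ⟨f, hf, hfxy⟩ := htrans x y
    obtain ⟨c, hc, hcv⟩ := ih _ v ((length_sect (hG hf) [x] u).trans hxu) hyv
    obtain ⟨h, hh, hhc⟩ :
        c ∈ (fun f => sect f [y]) '' (stL G 1 : Set (Equiv.Perm (List X))) := by
      rw [hfrac y]
      exact hc
    change sect h [y] = c at hhc
    refine ⟨h * f, mul_mem hh.1 hf, ?_⟩
    calc h (f ([x] ++ u)) = h ([y] ++ sect f [x] u) := by rw [apply_append_sect (hG hf), hfxy]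
      _ = y :: v := by rw [apply_append_sect (hG hh.1), hh.2 [y] rfl, hhc, hcv]; rfl

lemma superStronglyFractal_of_levelTransitive (hG : G ≤ AutT X) (hss : SelfSimilar G)
    (htrans : LevelTransitive G)
    (hfrac : ∀ n : ℕ, ∃ u : List X, u.length = n ∧
      (fun f => sect f u) '' (stL G n : Set (Equiv.Perm (List X))) = G) :
    SuperStronglyFractal G := fun n v hv => by
  obtain ⟨u, hu, hfrac⟩ := hfrac n
  obtain ⟨g, hg, rfl⟩ := htrans n u v hu hv
  exact sect_image_stL_eq_of_apply_eq hG hss hg hu hfrac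

end Fractality

/-- Let `G ≤ Aut T` be self-similar, containing a rooted
automorphism `a` whose root label is a `d`-cycle.  If for every `n` there is some
vertex `u_n ∈ L_n` with `ψ_{u_n}(st_G(L_n)) = G`, then `G` is super strongly fractal. -/
theorem superStronglyFractal_of_one_vertex (X : Type*) [Fintype X] [DecidableEq X]
    (G : Subgroup (Equiv.Perm (List X))) (hG : G ≤ AutT X) (hss : SelfSimilar G)
    (a : Equiv.Perm (List X)) (haG : a ∈ G)
    (hroot : ∀ x : X, sect a [x] = 1)
    (hcyc : (label a ([] : List X)).IsCycle)
    (hcycsupp : (label a ([] : List X)).support = Finset.univ)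
    (hgen : ∀ n : ℕ, ∃ u : List X, u.length = n ∧
      (fun g => sect g u) '' (stL G n : Set (Equiv.Perm (List X)))
        = (G : Set (Equiv.Perm (List X)))) :
    SuperStronglyFractal G := by
  have hT1 := firstLevelTransitive_of_rooted hG haG hroot hcyc hcycsupp
  have hSF := stronglyFractal_of_firstLevelTransitive hG hss hT1 (hgen 1)
  exact superStronglyFractal_of_levelTransitive hG hss
    (levelTransitive_of_stronglyFractal hG hT1 hSF) hgen

end TreeFract
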